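/- arXiv:2510.04025 — 7 statements merged into one kernel-verified Lean document; each statement's English description precedes it below -/
import Mathlib

section
/- Let f ∈ ℝ[x,y] be a nonzero homogeneous polynomial and l a nonzero linear form such that l² divides f. Then l divides Hess(f) = f_xx·f_yy − (f_xy)². -/
open MvPolynomial

noncomputable def Hess (f : MvPolynomial (Fin 2) ℝ) : MvPolynomial (Fin 2) ℝ :=
  pderiv 0 (pderiv 0 f) * pderiv 1 (pderiv 1 f) - (pderiv 0 (pderiv 1 f)) ^ 2

theorem linear_sq_factor_dvd_hess (f l : MvPolynomial (Fin 2) ℝ) (n : ℕ)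
    (hf : f ≠ 0) (hfh : f.IsHomogeneous n)
    (hl : l ≠ 0) (hlh : l.IsHomogeneous 1) (hdvd : l ^ 2 ∣ f) :
    l ∣ Hess f := by
  obtain ⟨g, rfl⟩ := hdvd
  set a := pderiv (0 : Fin 2) l with ha
  set b := pderiv (1 : Fin 2) l with hb
  set ax := pderiv (0 : Fin 2) (pderiv (0 : Fin 2) l) with hax
  set bx := pderiv (0 : Fin 2) (pderiv (1 : Fin 2) l) with hbx
  set by' := pderiv (1 : Fin 2) (pderiv (1 : Fin 2) l) with hby
  set gx := pderiv (0 : Fin 2) g with hgx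
  set gy := pderiv (1 : Fin 2) g with hgy
  set gxx := pderiv (0 : Fin 2) (pderiv (0 : Fin 2) g) with hgxx
  set gxy := pderiv (0 : Fin 2) (pderiv (1 : Fin 2) g) with hgxy
  set gyy := pderiv (1 : Fin 2) (pderiv (1 : Fin 2) g) with hgyy
  set P := 2*ax*g + 4*a*gx + l*gxx with hP
  set Q := 2*by'*g + 4*b*gy + l*gyy with hQ
  set R := 2*bx*g + 2*b*gx + 2*a*gy + l*gxy with hR
  refine ⟨2*a^2*g*Q + 2*b^2*g*P + l*P*Q - 4*a*b*g*R - l*R^2, ?_⟩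
  simp only [Hess, hP, hQ, hR, sq, pderiv_mul, map_add, ha, hb, hax, hbx, hby,
    hgx, hgy, hgxx, hgxy, hgyy]
  ring
end

section
/- Every real linear factor of a hyperbolic homogeneous polynomial in ℝ[x,y] has multiplicity one. -/
/-!
If `l ^ 2 ∣ f`, say `f = l ^ 2 * g`, then at any point `p` where `l` vanishes the Hessian matrix
of `f` is `2 g(p) ∇l(p) ∇l(p)ᵀ`, which has rank at most one, so `Hess f (p) = 0`. A nonzero real
linear form in two variables has a nonzero real zero, contradicting hyperbolicity.
-/

open MvPolynomial

theorem MvPolynomial.IsHomogeneous.eq_sum_C_mul_X {σ R : Type*} [Fintype σ] [CommSemiring R]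
    {l : MvPolynomial σ R} (hl : l.IsHomogeneous 1) :
    l = ∑ i, C (coeff 0 (pderiv i l)) * X i := by
  have hconst (i : σ) : pderiv i l = C (coeff 0 (pderiv i l)) :=
    totalDegree_eq_zero_iff_eq_C.mp <|
      (totalDegree_zero_iff_isHomogeneous (p := pderiv i l)).mpr hl.pderiv
  conv_lhs => rw [← one_smul ℕ l, ← hl.sum_X_mul_pderiv]
  refine Finset.sum_congr rfl fun i _ => ?_
  rw [mul_comm, ← hconst]

theorem exists_ne_zero_eval_eq_zero_of_isHomogeneous_one {R : Type*} [CommRing R]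
    {l : MvPolynomial (Fin 2) R} (hl : l ≠ 0) (hlh : l.IsHomogeneous 1) :
    ∃ x y : R, (x, y) ≠ (0, 0) ∧ eval ![x, y] l = 0 := by
  set a := coeff 0 (pderiv 0 l)
  set b := coeff 0 (pderiv 1 l)
  have hdec : l = C a * X 0 + C b * X 1 := by
    rw [hlh.eq_sum_C_mul_X, Fin.sum_univ_two]
  refine ⟨-b, a, fun hab => hl ?_, ?_⟩
  · obtain ⟨hb, ha⟩ := Prod.mk.inj hab
    rw [hdec, ha, neg_eq_zero.mp hb]
    simp
  · rw [hdec]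
    simp only [map_add, map_mul, eval_C, eval_X, Matrix.cons_val_zero, Matrix.cons_val_one,
      Matrix.cons_val_fin_one]
    ring

theorem eval_hess_sq_mul_eq_zero {l : MvPolynomial (Fin 2) ℝ} {p : Fin 2 → ℝ}
    (hl : eval p l = 0) (g : MvPolynomial (Fin 2) ℝ) :
    eval p (Hess (l ^ 2 * g)) = 0 := by
  simp only [Hess, Derivation.leibniz, Derivation.leibniz_pow, map_add, map_sub, map_mul, map_pow,
    smul_eq_mul, map_natCast, nsmul_eq_mul, hl]
  ring

theorem hyperbolic_linear_factors_simple_general (f : MvPolynomial (Fin 2) ℝ)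
    (hhyp : ∀ x y : ℝ, (x, y) ≠ (0, 0) → eval ![x, y] (Hess f) < 0)
    (l : MvPolynomial (Fin 2) ℝ) (hl : l ≠ 0) (hlh : l.IsHomogeneous 1) :
    ¬ (l ^ 2 ∣ f) := by
  rintro ⟨g, rfl⟩
  obtain ⟨x, y, hxy, hzero⟩ := exists_ne_zero_eval_eq_zero_of_isHomogeneous_one hl hlh
  exact (hhyp x y hxy).ne (eval_hess_sq_mul_eq_zero hzero g)

theorem hyperbolic_linear_factors_simple (f : MvPolynomial (Fin 2) ℝ) (n : ℕ)
    (hf : f ≠ 0) (hfh : f.IsHomogeneous n)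
    (hhyp : ∀ x y : ℝ, (x, y) ≠ (0, 0) → eval ![x, y] (Hess f) < 0)
    (l : MvPolynomial (Fin 2) ℝ) (hl : l ≠ 0) (hlh : l.IsHomogeneous 1)
    (hdvd : l ∣ f) : ¬ (l ^ 2 ∣ f) :=
  hyperbolic_linear_factors_simple_general f hhyp l hl hlh
end

section
/- Every homogeneous polynomial f ∈ ℝ[x,y] of degree n ≥ 2 that factors as a product of n real linear forms which are pairwise distinct up to nonzero constant multiples is hyperbolic, i.e., Hess(f)(x,y) < 0 for all (x,y) ≠ (0,0). -/
/-!
Put `ℓₖ = aₖ x + bₖ y` and `f = ∏ ℓₖ`. Where no `ℓₖ` vanishes, logarithmic differentiation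
expresses the second derivatives of `f` through `uₖ = aₖ / ℓₖ` and `vₖ = bₖ / ℓₖ`, e.g.
`f_xx = f ((∑ uₖ)² - ∑ uₖ²)`, and the relation `x uₖ + y vₖ = 1` turns `Hess f` into
`-(n - 1) f² (∑ uₖ² ∑ vₖ² - (∑ uₖ vₖ)²)`, negative by the strict Cauchy–Schwarz inequality
since `u` and `v` are not proportional.
At a zero of some `ℓᵢ`, write `f = ℓᵢ g`; there `Hess f = -(aᵢ g_y - bᵢ g_x)²`. As `(x, y)` is
orthogonal to `(aᵢ, bᵢ)`, this bracket vanishes only together with the Euler derivative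
`x g_x + y g_y = (n - 1) g`, and `g` does not vanish there because no other `ℓₖ` does.
-/

open MvPolynomial Finset

section ProdDerivative

variable {σ ι K : Type*} [Field K] [DecidableEq ι] {L : ι → MvPolynomial σ K} {p : σ → K}

theorem MvPolynomial.eval_pderiv_prod {m : σ} {c : ι → K} {s : Finset ι}
    (hc : ∀ i ∈ s, pderiv m (L i) = C (c i)) (hp : ∀ i ∈ s, eval p (L i) ≠ 0) :
    eval p (pderiv m (∏ i ∈ s, L i)) =
      eval p (∏ i ∈ s, L i) * ∑ i ∈ s, c i / eval p (L i) := by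
  induction s using Finset.induction_on with
  | empty => simp
  | insert j s hj ih =>
    simp only [mem_insert, forall_eq_or_imp] at hc hp
    rw [prod_insert hj, sum_insert hj, Derivation.leibniz, hc.1]
    simp only [smul_eq_mul, map_add, map_mul, eval_C, ih hc.2 hp.2]
    field_simp [hp.1]
    ring

theorem MvPolynomial.eval_pderiv_pderiv_prod {m m' : σ} {c c' : ι → K} {s : Finset ι}
    (hc : ∀ i ∈ s, pderiv m (L i) = C (c i)) (hc' : ∀ i ∈ s, pderiv m' (L i) = C (c' i))
    (hp : ∀ i ∈ s, eval p (L i) ≠ 0) :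
    eval p (pderiv m' (pderiv m (∏ i ∈ s, L i))) = eval p (∏ i ∈ s, L i) *
      ((∑ i ∈ s, c i / eval p (L i)) * (∑ i ∈ s, c' i / eval p (L i))
        - ∑ i ∈ s, c i / eval p (L i) * (c' i / eval p (L i))) := by
  induction s using Finset.induction_on with
  | empty => simp
  | insert j s hj ih =>
    simp only [mem_insert, forall_eq_or_imp] at hc hc' hp
    rw [prod_insert hj, sum_insert hj, sum_insert hj, sum_insert hj]
    simp only [Derivation.leibniz, hc.1, hc'.1, pderiv_C, smul_eq_mul, mul_zero, map_zero, map_add,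
      map_mul, eval_C, ih hc.2 hc'.2 hp.2, eval_pderiv_prod hc.2 hp.2, eval_pderiv_prod hc'.2 hp.2]
    field_simp [hp.1]
    ring

end ProdDerivative

theorem Finset.two_mul_sum_sq_mul_sum_sq_sub_sq_eq {ι R : Type*} [CommRing R] (s : Finset ι)
    (u v : ι → R) :
    2 * ((∑ i ∈ s, u i ^ 2) * (∑ i ∈ s, v i ^ 2) - (∑ i ∈ s, u i * v i) ^ 2) =
      ∑ i ∈ s, ∑ j ∈ s, (u i * v j - u j * v i) ^ 2 := by
  calc
    _ = ∑ i ∈ s, ∑ j ∈ s, (u i ^ 2 * v j ^ 2 + v i ^ 2 * u j ^ 2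
          - 2 * (u i * v i) * (u j * v j)) := by
      simp only [sum_add_distrib, sum_sub_distrib, ← mul_sum, ← sum_mul]
      ring
    _ = _ := sum_congr rfl fun _ _ ↦ sum_congr rfl fun _ _ ↦ by ring

theorem Finset.sq_sum_mul_lt_sum_sq_mul_sum_sq {ι R : Type*} [CommRing R] [LinearOrder R]
    [IsStrictOrderedRing R] {s : Finset ι} {u v : ι → R}
    {i j : ι} (hi : i ∈ s) (hj : j ∈ s) (hij : u i * v j - u j * v i ≠ 0) :
    (∑ k ∈ s, u k * v k) ^ 2 < (∑ k ∈ s, u k ^ 2) * (∑ k ∈ s, v k ^ 2) := by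
  have hpos : 0 < ∑ k ∈ s, ∑ l ∈ s, (u k * v l - u l * v k) ^ 2 :=
    sum_pos' (fun _ _ ↦ sum_nonneg fun _ _ ↦ sq_nonneg _)
      ⟨i, hi, sum_pos' (fun _ _ ↦ sq_nonneg _) ⟨j, hj, by positivity⟩⟩
  linarith [s.two_mul_sum_sq_mul_sum_sq_sub_sq_eq u v]

theorem Finset.det_sq_sum_sub_sum_sq_of_mul_add_mul_eq_one {ι R : Type*} [CommRing R]
    (s : Finset ι) (u v : ι → R) (x y : R) (h : ∀ i ∈ s, x * u i + y * v i = 1) :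
    ((∑ i ∈ s, u i) ^ 2 - ∑ i ∈ s, u i ^ 2) * ((∑ i ∈ s, v i) ^ 2 - ∑ i ∈ s, v i ^ 2)
        - ((∑ i ∈ s, u i) * (∑ i ∈ s, v i) - ∑ i ∈ s, u i * v i) ^ 2 =
      -(#s - 1) * ((∑ i ∈ s, u i ^ 2) * (∑ i ∈ s, v i ^ 2) - (∑ i ∈ s, u i * v i) ^ 2) := by
  have hA : ∑ i ∈ s, u i = x * ∑ i ∈ s, u i ^ 2 + y * ∑ i ∈ s, u i * v i := by
    simp only [mul_sum, ← sum_add_distrib]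
    exact sum_congr rfl fun i hi ↦ by linear_combination -u i * h i hi
  have hB : ∑ i ∈ s, v i = x * ∑ i ∈ s, u i * v i + y * ∑ i ∈ s, v i ^ 2 := by
    simp only [mul_sum, ← sum_add_distrib]
    exact sum_congr rfl fun i hi ↦ by linear_combination -v i * h i hi
  have hN : (#s : R) = x * ∑ i ∈ s, u i + y * ∑ i ∈ s, v i := by
    simp only [card_eq_sum_ones, Nat.cast_sum, Nat.cast_one, mul_sum, ← sum_add_distrib]
    exact sum_congr rfl fun i hi ↦ (h i hi).symm
  rw [hN, hA, hB]
  ring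

theorem pderiv_zero_C_mul_X_add_C_mul_X (a b : ℝ) :
    pderiv 0 (C a * X 0 + C b * X 1 : MvPolynomial (Fin 2) ℝ) = C a := by
  simp [pderiv_X]

theorem pderiv_one_C_mul_X_add_C_mul_X (a b : ℝ) :
    pderiv 1 (C a * X 0 + C b * X 1 : MvPolynomial (Fin 2) ℝ) = C b := by
  simp [pderiv_X]

theorem eval_hess_mul_of_eval_eq_zero {ℓ : MvPolynomial (Fin 2) ℝ} {a b : ℝ}
    (ha : pderiv 0 ℓ = C a) (hb : pderiv 1 ℓ = C b) (g : MvPolynomial (Fin 2) ℝ)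
    {p : Fin 2 → ℝ} (hp : eval p ℓ = 0) :
    eval p (Hess (ℓ * g)) = -(a * eval p (pderiv 1 g) - b * eval p (pderiv 0 g)) ^ 2 := by
  simp only [Hess, Derivation.leibniz, ha, hb, pderiv_C,
    smul_eq_mul, map_add, map_mul, map_sub, map_pow, map_zero, eval_C, hp]
  ring

theorem eval_C_mul_X_add_C_mul_X (a b x y : ℝ) :
    eval ![x, y] (C a * X 0 + C b * X 1) = a * x + b * y := by
  simp

theorem eval_X_mul_pderiv_add_prod {ι : Type*} (s : Finset ι) (a b : ι → ℝ) (x y : ℝ) :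
    x * eval ![x, y] (pderiv 0 (∏ k ∈ s, (C (a k) * X 0 + C (b k) * X 1))) +
      y * eval ![x, y] (pderiv 1 (∏ k ∈ s, (C (a k) * X 0 + C (b k) * X 1))) =
      #s * eval ![x, y] (∏ k ∈ s, (C (a k) * X 0 + C (b k) * X 1)) := by
  have hom : (∏ k ∈ s, (C (a k) * X 0 + C (b k) * X 1 : MvPolynomial (Fin 2) ℝ)).IsHomogeneous
      #s := by
    simpa using IsHomogeneous.prod s _ (fun _ ↦ 1) fun k _ ↦
      (isHomogeneous_C_mul_X (a k) 0).add (isHomogeneous_C_mul_X (b k) 1)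
  simpa [Fin.sum_univ_two] using congrArg (eval ![x, y]) hom.sum_X_mul_pderiv

theorem eq_zero_of_mul_add_mul_eq_zero_of_det_ne_zero {K : Type*} [Field K] {a b a' b' x y : K}
    (hd : a * b' - a' * b ≠ 0) (h : a * x + b * y = 0) (h' : a' * x + b' * y = 0) :
    x = 0 ∧ y = 0 := by
  have hx : (a * b' - a' * b) * x = 0 := by linear_combination b' * h - b * h'
  have hy : (a * b' - a' * b) * y = 0 := by linear_combination a * h' - a' * h
  exact ⟨(mul_eq_zero.1 hx).resolve_left hd, (mul_eq_zero.1 hy).resolve_left hd⟩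

theorem mul_div_add_mul_div_eq_one {K : Type*} [Field K] {a b x y : K} (h : a * x + b * y ≠ 0) :
    x * (a / (a * x + b * y)) + y * (b / (a * x + b * y)) = 1 := by
  rw [← mul_div_assoc, ← mul_div_assoc, ← add_div, div_eq_one_iff_eq h]
  ring

section

variable {ι : Type*} [DecidableEq ι] {s : Finset ι} {a b : ι → ℝ} {x y : ℝ}

theorem eval_hess_prod_neg_of_forall_ne_zero {i j : ι} (hi : i ∈ s) (hj : j ∈ s)
    (hij : a i * b j - a j * b i ≠ 0) (hl : ∀ k ∈ s, a k * x + b k * y ≠ 0) :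
    eval ![x, y] (Hess (∏ k ∈ s, (C (a k) * X 0 + C (b k) * X 1))) < 0 := by
  have hev : ∀ k ∈ s, eval ![x, y] (C (a k) * X 0 + C (b k) * X 1) ≠ 0 := by
    simpa only [eval_C_mul_X_add_C_mul_X] using hl
  have h0 := fun k (_ : k ∈ s) ↦ pderiv_zero_C_mul_X_add_C_mul_X (a k) (b k)
  have h1 := fun k (_ : k ∈ s) ↦ pderiv_one_C_mul_X_add_C_mul_X (a k) (b k)
  rw [Hess, map_sub, map_mul, map_pow, eval_pderiv_pderiv_prod h0 h0 hev,
    eval_pderiv_pderiv_prod h1 h1 hev, eval_pderiv_pderiv_prod h1 h0 hev]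
  simp only [eval_C_mul_X_add_C_mul_X, map_prod]
  set l := fun k ↦ a k * x + b k * y
  set u := fun k ↦ a k / l k
  set v := fun k ↦ b k / l k
  have hP : ∑ k ∈ s, a k / l k * (a k / l k) = ∑ k ∈ s, u k ^ 2 :=
    sum_congr rfl fun k _ ↦ (sq (u k)).symm
  have hQ : ∑ k ∈ s, b k / l k * (b k / l k) = ∑ k ∈ s, v k ^ 2 :=
    sum_congr rfl fun k _ ↦ (sq (v k)).symm
  have hR : ∑ k ∈ s, b k / l k * (a k / l k) = ∑ k ∈ s, u k * v k :=
    sum_congr rfl fun k _ ↦ mul_comm (v k) (u k)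
  rw [hP, hQ, hR]
  have key := s.det_sq_sum_sub_sum_sq_of_mul_add_mul_eq_one u v x y
    fun k hk ↦ mul_div_add_mul_div_eq_one (hl k hk)
  have gram : (∑ k ∈ s, u k * v k) ^ 2 < (∑ k ∈ s, u k ^ 2) * (∑ k ∈ s, v k ^ 2) := by
    refine sq_sum_mul_lt_sum_sq_mul_sum_sq hi hj ?_
    have : u i * v j - u j * v i = (a i * b j - a j * b i) / (l i * l j) := by
      simp only [u, v]
      field_simp [hl i hi, hl j hj]
    rw [this]
    exact div_ne_zero hij (mul_ne_zero (hl i hi) (hl j hj))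
  have hcard : (2 : ℝ) ≤ #s := by
    have : i ≠ j := by rintro rfl; exact hij (sub_self _)
    exact_mod_cast one_lt_card.2 ⟨i, hi, j, hj, this⟩
  have hF : ∏ k ∈ s, l k ≠ 0 := prod_ne_zero_iff.2 hl
  calc _ = (∏ k ∈ s, l k) ^ 2 * (-(#s - 1) *
        ((∑ k ∈ s, u k ^ 2) * (∑ k ∈ s, v k ^ 2) - (∑ k ∈ s, u k * v k) ^ 2)) := by
        linear_combination (∏ k ∈ s, l k) ^ 2 * key
    _ < 0 := mul_neg_of_pos_of_neg (by positivity)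
        (mul_neg_of_neg_of_pos (by linarith) (by linarith))

theorem eval_hess_prod_neg_of_eval_eq_zero {i : ι} (hi : i ∈ s) (hs : 1 < #s)
    (hpair : ∀ j ∈ s, j ≠ i → a i * b j - a j * b i ≠ 0) (hxy : (x, y) ≠ (0, 0))
    (h0 : a i * x + b i * y = 0) :
    eval ![x, y] (Hess (∏ k ∈ s, (C (a k) * X 0 + C (b k) * X 1))) < 0 := by
  obtain ⟨j, hj, hji⟩ := exists_mem_ne hs i
  set g : MvPolynomial (Fin 2) ℝ := ∏ k ∈ s.erase i, (C (a k) * X 0 + C (b k) * X 1)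
  have hev : ∀ k ∈ s.erase i, eval ![x, y] (C (a k) * X 0 + C (b k) * X 1) ≠ 0 := by
    intro k hk hlk
    rw [eval_C_mul_X_add_C_mul_X] at hlk
    obtain ⟨hx, hy⟩ := eq_zero_of_mul_add_mul_eq_zero_of_det_ne_zero
      (hpair k (mem_of_mem_erase hk) (ne_of_mem_erase hk)) h0 hlk
    exact hxy (by rw [hx, hy])
  have hE : x * eval ![x, y] (pderiv 0 g) + y * eval ![x, y] (pderiv 1 g) ≠ 0 := by
    rw [eval_X_mul_pderiv_add_prod, map_prod]
    exact mul_ne_zero (Nat.cast_ne_zero.2 (card_ne_zero_of_mem (mem_erase.2 ⟨hji, hj⟩)))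
      (prod_ne_zero_iff.2 hev)
  rw [← mul_prod_erase s _ hi, eval_hess_mul_of_eval_eq_zero (pderiv_zero_C_mul_X_add_C_mul_X _ _)
    (pderiv_one_C_mul_X_add_C_mul_X _ _) _ (by rwa [eval_C_mul_X_add_C_mul_X])]
  refine neg_neg_of_pos (sq_pos_of_ne_zero fun hD ↦ hpair j hj hji ?_)
  set gx := eval ![x, y] (pderiv 0 g)
  set gy := eval ![x, y] (pderiv 1 g)
  have ha : a i * (x * gx + y * gy) = 0 := by linear_combination gx * h0 + y * hD
  have hb : b i * (x * gx + y * gy) = 0 := by linear_combination gy * h0 - x * hD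
  rw [(mul_eq_zero.1 ha).resolve_right hE, (mul_eq_zero.1 hb).resolve_right hE]
  ring

end

theorem split_simple_factors_hyperbolic (n : ℕ) (hn : 2 ≤ n)
    (a b : Fin n → ℝ)
    (hpair : ∀ i j, i ≠ j → a i * b j - a j * b i ≠ 0)
    (f : MvPolynomial (Fin 2) ℝ)
    (hf : f = ∏ i, (C (a i) * X 0 + C (b i) * X 1)) :
    ∀ x y : ℝ, (x, y) ≠ (0, 0) → eval ![x, y] (Hess f) < 0 := by
  intro x y hxy
  subst hf
  by_cases hzero : ∃ i, a i * x + b i * y = 0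
  · obtain ⟨i, hi⟩ := hzero
    exact eval_hess_prod_neg_of_eval_eq_zero (mem_univ i)
      (by rw [card_univ, Fintype.card_fin]; omega) (fun j _ hji ↦ hpair i j hji.symm) hxy hi
  · push Not at hzero
    exact eval_hess_prod_neg_of_forall_ne_zero (mem_univ ⟨0, by omega⟩)
      (mem_univ ⟨1, by omega⟩) (hpair _ _ (by simp [Fin.ext_iff])) fun k _ ↦ hzero k
end

section
/- A hyperbolic homogeneous polynomial in ℝ[x,y] of degree n ≥ 2 has at least one real linear factor. -/
open MvPolynomial

/-!
If `f` had no zero on the line `y = 1`, then `|f(t, 1)|` would attain a positive minimum at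
some `t`; replacing `f` by `-f` we may assume `f(t, 1) > 0`, so `f_x(t, 1) = 0` and
`f_xx(t, 1) ≥ 0`. Euler's identity for `f`, `f_x` and `f_y` then gives
`Hess f (t, 1) = n (n - 1) f(t, 1) f_xx(t, 1) ≥ 0`, contradicting hyperbolicity.
A zero `(a, 1)` of the homogeneous polynomial `f` yields the factor `x - a y`.
-/

open Filter Topology

theorem IsLocalMin.deriv_deriv_nonneg {f : ℝ → ℝ} {a : ℝ} (h : IsLocalMin f a)
    (hc : ContinuousAt f a) : 0 ≤ deriv (deriv f) a := by
  by_contra! hneg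
  -- By the second-derivative test `a` is also a local maximum, so `f` is locally constant.
  have hmax := isLocalMax_of_deriv_deriv_neg hneg h.deriv_eq_zero hc
  have hconst : f =ᶠ[𝓝 a] fun _ => f a := by
    filter_upwards [h, hmax] with x hmin hmax using le_antisymm hmax hmin
  have hderiv : deriv f =ᶠ[𝓝 a] fun _ => 0 := by
    filter_upwards [hconst.eventuallyEq_nhds] with x hx
    rw [hx.deriv_eq, deriv_const]
  rw [hderiv.deriv_eq, deriv_const] at hneg
  exact hneg.false

theorem IsLocalMin.of_forall_abs_le {g : ℝ → ℝ} {t : ℝ} (hg : ContinuousAt g t)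
    (ht : 0 < g t) (hmin : ∀ s, |g t| ≤ |g s|) : IsLocalMin g t := by
  filter_upwards [hg.eventually (lt_mem_nhds ht)] with s hs
  simpa [abs_of_pos ht, abs_of_pos hs] using hmin s

namespace MvPolynomial

section CommSemiring

variable {R σ : Type*} [CommSemiring R]

theorem pderiv_comm (i j : σ) (f : MvPolynomial σ R) :
    pderiv i (pderiv j f) = pderiv j (pderiv i f) := by
  induction f using MvPolynomial.induction_on with
  | C a => simp
  | add p q hp hq => simp only [map_add, hp, hq]
  | mul_X p k hp =>
    have hX : ∀ a b, pderiv a (pderiv b (X k : MvPolynomial σ R)) = 0 := by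
      classical
      intro a b
      rw [pderiv_X, Pi.single_apply]
      split_ifs <;> simp
    simp only [pderiv_mul, map_add, hp, hX]
    ring

theorem IsHomogeneous.aeval_smul {S : Type*} [CommSemiring S] [Algebra R S]
    {φ : MvPolynomial σ R} {n : ℕ} (hφ : φ.IsHomogeneous n) (r : S) (x : σ → S) :
    MvPolynomial.aeval (r • x) φ = r ^ n * MvPolynomial.aeval x φ := by
  conv_lhs => rw [φ.as_sum]
  conv_rhs => rw [φ.as_sum]
  simp only [map_sum, aeval_monomial, Finset.mul_sum]
  refine Finset.sum_congr rfl fun d hd => ?_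
  simp only [Pi.smul_apply, smul_eq_mul, mul_pow, Finsupp.prod, Finset.prod_mul_distrib,
    Finset.prod_pow_eq_pow_sum, ← hφ.degree_eq_sum_deg_support hd]
  ring

theorem IsHomogeneous.sum_mul_eval_pderiv [Fintype σ] {φ : MvPolynomial σ R} {n : ℕ}
    (hφ : φ.IsHomogeneous n) (x : σ → R) :
    ∑ i, x i * eval x (pderiv i φ) = n * eval x φ := by
  simpa using congrArg (eval x) hφ.sum_X_mul_pderiv

theorem eval_finSuccEquiv {n : ℕ} (c : MvPolynomial (Fin n) R)
    (f : MvPolynomial (Fin (n + 1)) R) :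
    (finSuccEquiv R n f).eval c = aeval (Fin.cons c X) f := by
  induction f using MvPolynomial.induction_on with
  | C a => simp [finSuccEquiv_apply]
  | add p q hp hq => simp only [map_add, Polynomial.eval_add, hp, hq]
  | mul_X p i hp =>
    simp only [map_mul, Polynomial.eval_mul, hp]
    cases i using Fin.cases <;> simp [finSuccEquiv_X_zero, finSuccEquiv_X_succ]

noncomputable def dehomogenize : MvPolynomial (Fin 2) R →ₐ[R] Polynomial R :=
  aeval ![Polynomial.X, 1]

theorem eval_dehomogenize (g : MvPolynomial (Fin 2) R) (t : R) :
    (dehomogenize g).eval t = eval ![t, 1] g := by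
  induction g using MvPolynomial.induction_on with
  | C a => simp [dehomogenize]
  | add p q hp hq => simp only [map_add, Polynomial.eval_add, hp, hq]
  | mul_X p i hp =>
    simp only [map_mul, Polynomial.eval_mul, hp]
    fin_cases i <;> simp [dehomogenize]

theorem derivative_dehomogenize (g : MvPolynomial (Fin 2) R) :
    Polynomial.derivative (dehomogenize g) = dehomogenize (pderiv 0 g) := by
  induction g using MvPolynomial.induction_on with
  | C a => simp [dehomogenize]
  | add p q hp hq => simp only [map_add, hp, hq]
  | mul_X p i hp =>
    simp only [map_mul, Polynomial.derivative_mul, hp, pderiv_mul]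
    fin_cases i <;> simp [dehomogenize]

end CommSemiring

variable {R : Type*} [CommRing R]

theorem X_sub_C_mul_X_dvd_of_eval_eq_zero {f : MvPolynomial (Fin 2) R} {n : ℕ}
    (hf : f.IsHomogeneous n) {a : R} (ha : eval ![a, 1] f = 0) : X 0 - C a * X 1 ∣ f := by
  have he : finSuccEquiv R 1 (X 0 - C a * X 1) = Polynomial.X - Polynomial.C (C a * X 0) := by
    rw [map_sub, map_mul, finSuccEquiv_X_zero, ← Fin.succ_zero_eq_one,
      finSuccEquiv_X_succ (R := R)]
    simp [finSuccEquiv_apply]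
  have hpt : (Fin.cons (C a * X 0) X : Fin 2 → MvPolynomial (Fin 1) R) =
      (X 0 : MvPolynomial (Fin 1) R) • (C ∘ ![a, 1]) := by
    ext i : 1
    fin_cases i <;> simp [mul_comm]
  -- As a polynomial in `X 0` over `R[X 1]`, `f` has the root `a X 1`, by homogeneity.
  have hroot : (finSuccEquiv R 1 f).IsRoot (C a * X 0) := by
    rw [Polynomial.IsRoot, eval_finSuccEquiv, hpt, hf.aeval_smul, aeval_C_comp_left,
      aeval_eq_eval, ha, C_0, mul_zero]
  rw [← map_dvd_iff (finSuccEquiv R 1), he]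
  exact Polynomial.dvd_iff_isRoot.mpr hroot

theorem deriv_eval_vecCons_one (g : MvPolynomial (Fin 2) ℝ) :
    deriv (fun t => eval ![t, 1] g) = fun t => eval ![t, 1] (pderiv 0 g) := by
  ext t
  simp only [← eval_dehomogenize, Polynomial.deriv, derivative_dehomogenize]

end MvPolynomial

theorem hess_neg (f : MvPolynomial (Fin 2) ℝ) : Hess (-f) = Hess f := by
  simp only [Hess, map_neg]
  ring

theorem eval_hess_nonneg_of_isLocalMin {f : MvPolynomial (Fin 2) ℝ} {n : ℕ}
    (hf : f.IsHomogeneous n) {t : ℝ} (hnonneg : 0 ≤ eval ![t, 1] f)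
    (hmin : IsLocalMin (fun s => eval ![s, 1] f) t) : 0 ≤ eval ![t, 1] (Hess f) := by
  have hfx : eval ![t, 1] (pderiv 0 f) = 0 := by
    simpa only [deriv_eval_vecCons_one] using hmin.deriv_eq_zero
  have hfxx : 0 ≤ eval ![t, 1] (pderiv 0 (pderiv 0 f)) := by
    simpa only [deriv_eval_vecCons_one] using
      hmin.deriv_deriv_nonneg ((continuous_eval f).comp (by fun_prop)).continuousAt
  have e0 := hf.sum_mul_eval_pderiv ![t, 1]
  have e1 := (hf.pderiv (i := 0)).sum_mul_eval_pderiv ![t, 1]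
  have e2 := (hf.pderiv (i := 1)).sum_mul_eval_pderiv ![t, 1]
  simp only [Fin.sum_univ_two, Matrix.cons_val_zero, Matrix.cons_val_one, one_mul] at e0 e1 e2
  rw [pderiv_comm (1 : Fin 2) 0] at e1
  have key : eval ![t, 1] (Hess f) =
      ((n - 1 : ℕ) : ℝ) * n * eval ![t, 1] f * eval ![t, 1] (pderiv 0 (pderiv 0 f)) := by
    simp only [Hess, map_sub, map_mul, map_pow]
    linear_combination eval ![t, 1] (pderiv 0 (pderiv 0 f)) * e2
      - eval ![t, 1] (pderiv 0 (pderiv 1 f)) * e1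
      + ((n - 1 : ℕ) : ℝ) * eval ![t, 1] (pderiv 0 (pderiv 0 f)) * e0
      - ((n - 1 : ℕ) : ℝ) * (eval ![t, 1] (pderiv 0 (pderiv 1 f))
        + t * eval ![t, 1] (pderiv 0 (pderiv 0 f))) * hfx
  rw [key]
  positivity

theorem exists_eval_vecCons_one_eq_zero {f : MvPolynomial (Fin 2) ℝ} {n : ℕ}
    (hf : f.IsHomogeneous n) (hneg : ∀ t : ℝ, eval ![t, 1] (Hess f) < 0) :
    ∃ a : ℝ, eval ![a, 1] f = 0 := by
  by_contra! hne
  obtain ⟨t, ht⟩ := (dehomogenize f).exists_forall_norm_le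
  simp only [eval_dehomogenize, Real.norm_eq_abs] at ht
  wlog hpos : 0 < eval ![t, 1] f generalizing f
  · refine this hf.neg (by simpa [hess_neg] using hneg) (by simpa using hne) (by simpa using ht) ?_
    simpa using (hne t).lt_of_le (not_lt.mp hpos)
  have hmin : IsLocalMin (fun s => eval ![s, 1] f) t :=
    .of_forall_abs_le ((continuous_eval f).comp (by fun_prop)).continuousAt hpos ht
  exact (hneg t).not_ge (eval_hess_nonneg_of_isLocalMin hf hpos.le hmin)

theorem hyperbolic_has_real_linear_factor_general (f : MvPolynomial (Fin 2) ℝ) (n : ℕ)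
    (hfh : f.IsHomogeneous n)
    (hhyp : ∀ x y : ℝ, (x, y) ≠ (0, 0) → eval ![x, y] (Hess f) < 0) :
    ∃ l : MvPolynomial (Fin 2) ℝ, l ≠ 0 ∧ l.IsHomogeneous 1 ∧ l ∣ f := by
  obtain ⟨a, ha⟩ := exists_eval_vecCons_one_eq_zero hfh fun t => hhyp t 1 (by simp)
  refine ⟨X 0 - C a * X 1, fun h => ?_, (isHomogeneous_X ℝ 0).sub (isHomogeneous_C_mul_X a 1),
    X_sub_C_mul_X_dvd_of_eval_eq_zero hfh ha⟩
  simpa using congrArg (eval ![1, 0]) h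

theorem hyperbolic_has_real_linear_factor (f : MvPolynomial (Fin 2) ℝ) (n : ℕ)
    (hn : 2 ≤ n) (hf : f ≠ 0) (hfh : f.IsHomogeneous n)
    (hhyp : ∀ x y : ℝ, (x, y) ≠ (0, 0) → eval ![x, y] (Hess f) < 0) :
    ∃ l : MvPolynomial (Fin 2) ℝ, l ≠ 0 ∧ l.IsHomogeneous 1 ∧ l ∣ f :=
  hyperbolic_has_real_linear_factor_general f n hfh hhyp
end

section
/- If f ∈ ℝ[x,y] is a homogeneous polynomial of degree n ≥ 2 with no repeated real linear factors and at least one real linear factor (more generally, with no repeated irreducible factors), then Hess(f) is not the zero polynomial. -/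
open MvPolynomial

/-!
Euler's identity, applied to `f`, `f_x` and `f_y`, gives
`n (n - 1) f f_xx - ((n - 1) f_x)² = y² Hess f`. So if `Hess f = 0`, then `f` divides
`((n - 1) f_x)²`, hence `(n - 1) f_x` since `f` is squarefree; having smaller degree than `f`,
it vanishes, so `f_x = 0`. Symmetrically `f_y = 0`, and Euler's identity then forces `f = 0`.
-/

namespace MvPolynomial

theorem pderiv_pderiv_comm {R σ : Type*} [CommRing R] (i j : σ) (p : MvPolynomial σ R) :
    pderiv i (pderiv j p) = pderiv j (pderiv i p) := by
  have hcomm : ⁅pderiv (R := R) i, pderiv (R := R) j⁆ = 0 := by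
    classical
    refine derivation_ext fun k => ?_
    simp [Derivation.commutator_apply, pderiv_X, Pi.single_apply, apply_ite]
  exact sub_eq_zero.mp congr($hcomm p)

theorem IsHomogeneous.eq_zero_of_dvd {R σ : Type*} [CommRing R] [IsDomain R]
    {f p : MvPolynomial σ R} {m n : ℕ} (hf : f.IsHomogeneous n) (hf0 : f ≠ 0)
    (hp : p.IsHomogeneous m) (hmn : m < n) (hdvd : f ∣ p) : p = 0 := by
  by_contra hp0
  have := totalDegree_le_of_dvd_of_isDomain hdvd hp0
  rw [hf.totalDegree hf0, hp.totalDegree hp0] at this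
  omega

section TwoVariables

variable {R : Type*} [CommRing R] {f : MvPolynomial (Fin 2) R} {n : ℕ} {i j : Fin 2}

theorem IsHomogeneous.X_mul_pderiv_add_X_mul_pderiv (h : f.IsHomogeneous n) (hij : i ≠ j) :
    X i * pderiv i f + X j * pderiv j f = n • f := by
  rw [← h.sum_X_mul_pderiv]
  fin_cases i <;> fin_cases j <;> simp_all [Fin.sum_univ_two, add_comm]

theorem IsHomogeneous.nsmul_mul_pderiv_pderiv_sub_sq (h : f.IsHomogeneous n) (hij : i ≠ j) :
    (n * (n - 1)) • (f * pderiv i (pderiv i f)) - ((n - 1) • pderiv i f) ^ 2 =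
      X j ^ 2 * (pderiv i (pderiv i f) * pderiv j (pderiv j f) - pderiv i (pderiv j f) ^ 2) := by
  have euler := h.X_mul_pderiv_add_X_mul_pderiv hij
  have euler_i := (h.pderiv (i := i)).X_mul_pderiv_add_X_mul_pderiv hij
  have euler_j := (h.pderiv (i := j)).X_mul_pderiv_add_X_mul_pderiv hij
  rw [pderiv_pderiv_comm j i] at euler_i
  simp only [nsmul_eq_mul] at *
  push_cast
  linear_combination (-((n - 1 : ℕ) * pderiv i (pderiv i f))) * euler +
    (X j * pderiv i (pderiv j f) + (n - 1 : ℕ) * pderiv i f) * euler_i -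
    (X j * pderiv i (pderiv i f)) * euler_j

theorem IsHomogeneous.pderiv_eq_zero_of_hessian_eq_zero [IsDomain R]
    [UniqueFactorizationMonoid R] [CharZero R] (h : f.IsHomogeneous n) (hn : 2 ≤ n)
    (hf : Squarefree f) (hij : i ≠ j)
    (hH : pderiv i (pderiv i f) * pderiv j (pderiv j f) - pderiv i (pderiv j f) ^ 2 = 0) :
    pderiv i f = 0 := by
  have hsq : ((n - 1) • pderiv i f) ^ 2 = f * (n * (n - 1)) • pderiv i (pderiv i f) := by
    have := h.nsmul_mul_pderiv_pderiv_sub_sq hij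
    rw [hH, mul_zero, sub_eq_zero, ← mul_smul_comm] at this
    exact this.symm
  have hdvd : f ∣ (n - 1) • pderiv i f := (hf.dvd_pow_iff_dvd two_ne_zero).mp ⟨_, hsq⟩
  have hhom : ((n - 1) • pderiv i f).IsHomogeneous (n - 1) :=
    nsmul_mem (S := homogeneousSubmodule (Fin 2) R (n - 1)) h.pderiv _
  have hzero := h.eq_zero_of_dvd hf.ne_zero hhom (by omega) hdvd
  exact (smul_eq_zero.mp hzero).resolve_left (by omega)

end TwoVariables

end MvPolynomial

theorem squarefree_hess_ne_zero (f : MvPolynomial (Fin 2) ℝ) (n : ℕ)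
    (hn : 2 ≤ n) (hfh : f.IsHomogeneous n) (hsf : Squarefree f) :
    Hess f ≠ 0 := by
  intro hH
  have hx : pderiv 0 f = 0 := hfh.pderiv_eq_zero_of_hessian_eq_zero hn hsf zero_ne_one hH
  have hy : pderiv 1 f = 0 := by
    refine hfh.pderiv_eq_zero_of_hessian_eq_zero hn hsf one_ne_zero ?_
    rw [mul_comm, pderiv_pderiv_comm 1 0]
    exact hH
  have euler := hfh.X_mul_pderiv_add_X_mul_pderiv (zero_ne_one (α := Fin 2))
  rw [hx, hy, mul_zero, mul_zero, add_zero, eq_comm, smul_eq_zero] at euler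
  exact euler.elim (by omega) hsf.ne_zero
end

section
/- Let f ∈ ℝ[x,y] be a polynomial of degree n ≥ 3 whose top-degree homogeneous part f_n is hyperbolic (i.e., Hess(f_n)(x,y) < 0 for all (x,y) ≠ (0,0)). Then the set {(x,y) ∈ ℝ² : Hess(f)(x,y) ≥ 0} is bounded; in particular the Hessian curve {Hess(f) = 0} is compact and the unbounded complementary region consists of points where Hess(f) < 0. -/
open MvPolynomial

namespace HypAux

lemma degree_eq_sum (d : Fin 2 →₀ ℕ) : d.degree = ∑ i : Fin 2, d i := by
  rw [Finsupp.degree]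
  exact Finset.sum_subset (Finset.subset_univ _)
    (fun i _ hi => Finsupp.notMem_support_iff.mp hi)

lemma degree_add (a b : Fin 2 →₀ ℕ) : (a + b).degree = a.degree + b.degree := by
  simp [degree_eq_sum, Finset.sum_add_distrib]

lemma degree_single (i : Fin 2) : (Finsupp.single i 1).degree = 1 := by
  rw [degree_eq_sum]
  simp [Finsupp.single_apply]

lemma coeff_degree {p : MvPolynomial (Fin 2) ℝ} {m : ℕ} (hp : p.IsHomogeneous m)
    {d : Fin 2 →₀ ℕ} (hd : coeff d p ≠ 0) : d.degree = m := by
  have := hp hd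
  rwa [Finsupp.degree_eq_weight_one]

lemma sub_single_degree {v : Fin 2 →₀ ℕ} {i : Fin 2} (h0 : v i ≠ 0) :
    (v - Finsupp.single i 1).degree + 1 = v.degree := by
  have hle : Finsupp.single i 1 ≤ v := by
    rw [Finsupp.single_le_iff]; omega
  have hadd : (v - Finsupp.single i 1) + Finsupp.single i 1 = v :=
    tsub_add_cancel_of_le hle
  have := congrArg Finsupp.degree hadd
  rwa [degree_add, degree_single] at this

lemma isHomogeneous_pderiv {p : MvPolynomial (Fin 2) ℝ} {m : ℕ}
    (i : Fin 2) (hp : p.IsHomogeneous m) : (pderiv i p).IsHomogeneous (m - 1) := by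
  classical
  rw [p.as_sum, map_sum]
  apply IsHomogeneous.sum
  intro v hv
  rw [pderiv_monomial]
  by_cases h0 : v i = 0
  · simp only [h0, Nat.cast_zero, mul_zero, monomial_zero]
    exact isHomogeneous_zero _ _ _
  · apply isHomogeneous_monomial
    have h1 := sub_single_degree h0
    have hdeg : v.degree = m := coeff_degree hp (mem_support_iff.mp hv)
    omega

lemma totalDegree_pderiv_le (p : MvPolynomial (Fin 2) ℝ) (i : Fin 2) :
    (pderiv i p).totalDegree ≤ p.totalDegree - 1 := by
  classical
  conv_lhs => rw [p.as_sum, map_sum]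
  apply totalDegree_finsetSum_le
  intro v hv
  rw [pderiv_monomial]
  by_cases h0 : v i = 0
  · simp [h0]
  · refine (totalDegree_monomial_le _ _).trans ?_
    have h1 := sub_single_degree h0
    have h2 : v.degree ≤ p.totalDegree := le_totalDegree hv
    have h3 : ((v - Finsupp.single i 1).sum fun _ => id) = (v - Finsupp.single i 1).degree := rfl
    omega

lemma eval_smul {p : MvPolynomial (Fin 2) ℝ} {m : ℕ} (hp : p.IsHomogeneous m)
    (r : ℝ) (v : Fin 2 → ℝ) :
    eval (fun i => r * v i) p = r ^ m * eval v p := by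
  rw [eval_eq', eval_eq', Finset.mul_sum]
  apply Finset.sum_congr rfl
  intro d hd
  have hdeg : d.degree = m := coeff_degree hp (mem_support_iff.mp hd)
  have : ∏ i : Fin 2, (r * v i) ^ d i = r ^ m * ∏ i : Fin 2, v i ^ d i := by
    simp only [mul_pow, Finset.prod_mul_distrib, Finset.prod_pow_eq_pow_sum, ← degree_eq_sum, hdeg]
  rw [this]; ring

lemma eval_bound (g : MvPolynomial (Fin 2) ℝ) (d : ℕ) (hd : g.totalDegree ≤ d) :
    ∃ C : ℝ, 0 ≤ C ∧ ∀ (v : Fin 2 → ℝ) (r : ℝ), 1 ≤ r → (∀ i, |v i| ≤ r) →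
      |eval v g| ≤ C * r ^ d := by
  classical
  refine ⟨∑ m ∈ g.support, |coeff m g|,
    Finset.sum_nonneg fun _ _ => abs_nonneg _, fun v r hr hv => ?_⟩
  have hr0 : (0:ℝ) ≤ r := le_trans zero_le_one hr
  rw [eval_eq', Finset.sum_mul]
  refine (Finset.abs_sum_le_sum_abs _ _).trans (Finset.sum_le_sum fun m hm => ?_)
  rw [abs_mul]
  have h1 : |∏ i : Fin 2, v i ^ m i| ≤ r ^ d := by
    rw [Finset.abs_prod]
    calc ∏ i : Fin 2, |v i ^ m i| ≤ ∏ i : Fin 2, r ^ m i := by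
          apply Finset.prod_le_prod (fun i _ => abs_nonneg _)
          intro i _
          rw [abs_pow]
          exact pow_le_pow_left₀ (abs_nonneg _) (hv i) _
      _ = r ^ (∑ i : Fin 2, m i) := by rw [Finset.prod_pow_eq_pow_sum]
      _ ≤ r ^ d := by
          apply pow_le_pow_right₀ hr
          have h2 : m.degree ≤ g.totalDegree := le_totalDegree hm
          rw [degree_eq_sum] at h2
          omega
  exact mul_le_mul_of_nonneg_left h1 (abs_nonneg _)

end HypAux

theorem hyperbolic_top_part_bounded_elliptic_region
    (f : MvPolynomial (Fin 2) ℝ) (n : ℕ) (hn : 3 ≤ n)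
    (hdeg : f.totalDegree = n)
    (hhyp : ∀ x y : ℝ, (x, y) ≠ (0, 0) →
      eval ![x, y] (Hess (homogeneousComponent n f)) < 0) :
    Bornology.IsBounded {p : ℝ × ℝ | 0 ≤ eval ![p.1, p.2] (Hess f)} ∧
    IsCompact {p : ℝ × ℝ | eval ![p.1, p.2] (Hess f) = 0} := by
  classical
  set h := homogeneousComponent n f with hhdef
  have hhom : h.IsHomogeneous n := homogeneousComponent_isHomogeneous n f
  set l := f - h with hldef
  have hlf : f = h + l := by rw [hldef]; ring
  have hldeg : l.totalDegree ≤ n - 1 := by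
    have hsum := sum_homogeneousComponent f
    rw [hdeg] at hsum
    have hl2 : l = ∑ i ∈ Finset.range n, homogeneousComponent i f := by
      have h9 : (∑ i ∈ Finset.range (n + 1), homogeneousComponent i f)
          - homogeneousComponent n f = ∑ i ∈ Finset.range n, homogeneousComponent i f := by
        rw [Finset.sum_range_succ]; ring
      rw [hldef, hhdef, ← h9, hsum]
    rw [hl2]
    apply totalDegree_finsetSum_le
    intro i hi
    exact (homogeneousComponent_isHomogeneous i f).totalDegree_le.trans
      (by have := Finset.mem_range.mp hi; omega)
  set g : MvPolynomial (Fin 2) ℝ :=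
    pderiv 0 (pderiv 0 h) * pderiv 1 (pderiv 1 l)
    + pderiv 0 (pderiv 0 l) * pderiv 1 (pderiv 1 h)
    + pderiv 0 (pderiv 0 l) * pderiv 1 (pderiv 1 l)
    - (pderiv 0 (pderiv 1 h) * pderiv 0 (pderiv 1 l)
       + pderiv 0 (pderiv 1 h) * pderiv 0 (pderiv 1 l))
    - pderiv 0 (pderiv 1 l) * pderiv 0 (pderiv 1 l) with hgdef
  have key : Hess f = Hess h + g := by
    rw [hgdef]
    unfold Hess
    rw [hlf]
    simp only [map_add]
    ring
  -- degree bounds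
  have hDl : ∀ i j : Fin 2, (pderiv i (pderiv j l)).totalDegree ≤ n - 3 := by
    intro i j
    have t1 := HypAux.totalDegree_pderiv_le (pderiv j l) i
    have t2 := HypAux.totalDegree_pderiv_le l j
    omega
  have hDh : ∀ i j : Fin 2, (pderiv i (pderiv j h)).totalDegree ≤ n - 2 := by
    intro i j
    have := (HypAux.isHomogeneous_pderiv i (HypAux.isHomogeneous_pderiv j hhom)).totalDegree_le
    omega
  have subrule : ∀ (x y : MvPolynomial (Fin 2) ℝ) (d : ℕ),
      x.totalDegree ≤ d → y.totalDegree ≤ d → (x - y).totalDegree ≤ d := by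
    intro x y d hx hy
    rw [sub_eq_add_neg]
    exact (totalDegree_add _ _).trans (max_le hx (by rwa [totalDegree_neg]))
  have addrule : ∀ (x y : MvPolynomial (Fin 2) ℝ) (d : ℕ),
      x.totalDegree ≤ d → y.totalDegree ≤ d → (x + y).totalDegree ≤ d := fun x y d hx hy =>
    (totalDegree_add _ _).trans (max_le hx hy)
  have mulrule : ∀ (x y : MvPolynomial (Fin 2) ℝ) (a b : ℕ),
      x.totalDegree ≤ a → y.totalDegree ≤ b → (x * y).totalDegree ≤ a + b := fun x y a b hx hy =>
    (totalDegree_mul _ _).trans (add_le_add hx hy)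
  have hgdeg : g.totalDegree ≤ 2 * n - 5 := by
    rw [hgdef]
    have e1 : (n - 2) + (n - 3) = 2 * n - 5 := by omega
    have e2 : (n - 3) + (n - 2) = 2 * n - 5 := by omega
    have e3 : (n - 3) + (n - 3) ≤ 2 * n - 5 := by omega
    apply subrule _ _ _ (subrule _ _ _ (addrule _ _ _ (addrule _ _ _ ?_ ?_) ?_) ?_) ?_
    · exact e1 ▸ mulrule _ _ _ _ (hDh 0 0) (hDl 1 1)
    · exact e2 ▸ mulrule _ _ _ _ (hDl 0 0) (hDh 1 1)
    · exact (mulrule _ _ _ _ (hDl 0 0) (hDl 1 1)).trans e3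
    · exact addrule _ _ _ (e1 ▸ mulrule _ _ _ _ (hDh 0 1) (hDl 0 1))
        (e1 ▸ mulrule _ _ _ _ (hDh 0 1) (hDl 0 1))
    · exact (mulrule _ _ _ _ (hDl 0 1) (hDl 0 1)).trans e3
  -- Hess h is homogeneous of degree 2n-4
  have hHessHom : (Hess h).IsHomogeneous (2 * n - 4) := by
    unfold Hess
    have d1 := (HypAux.isHomogeneous_pderiv 0 (HypAux.isHomogeneous_pderiv 0 hhom)).mul
               (HypAux.isHomogeneous_pderiv 1 (HypAux.isHomogeneous_pderiv 1 hhom))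
    have d2 := (HypAux.isHomogeneous_pderiv 0 (HypAux.isHomogeneous_pderiv 1 hhom)).pow 2
    have e2 : n - 1 - 1 + (n - 1 - 1) = 2 * n - 4 := by omega
    have e3 : (n - 1 - 1) * 2 = 2 * n - 4 := by omega
    rw [e2] at d1; rw [e3] at d2
    exact d1.sub d2
  -- continuity
  have contEval : ∀ q : MvPolynomial (Fin 2) ℝ,
      Continuous fun p : ℝ × ℝ => eval ![p.1, p.2] q := by
    intro q
    apply (MvPolynomial.continuous_eval q).comp
    apply continuous_pi
    intro i
    fin_cases i
    · simpa using continuous_fst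
    · simpa using continuous_snd
  -- max of Hess h on unit sphere
  set S := Metric.sphere (0 : ℝ × ℝ) 1 with hSdef
  have hSc : IsCompact S := isCompact_sphere 0 1
  have hSne : S.Nonempty := NormedSpace.sphere_nonempty.mpr zero_le_one
  obtain ⟨u0, hu0S, hu0max⟩ := hSc.exists_isMaxOn hSne (contEval (Hess h)).continuousOn
  set c : ℝ := -(eval ![u0.1, u0.2] (Hess h)) with hcdef
  have hu0norm : ‖u0‖ = 1 := by
    have := hu0S
    rwa [hSdef, mem_sphere_zero_iff_norm] at this
  have hcpos : 0 < c := by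
    have hne : (u0.1, u0.2) ≠ ((0 : ℝ), (0 : ℝ)) := by
      intro hcon
      have h1 : u0 = ((0 : ℝ), (0 : ℝ)) := by
        rw [← Prod.mk.eta (p := u0), hcon]
      rw [h1] at hu0norm
      simp at hu0norm
    have := hhyp u0.1 u0.2 hne
    simp only [hcdef]
    linarith
  have hub : ∀ u : ℝ × ℝ, u ∈ S → eval ![u.1, u.2] (Hess h) ≤ -c := by
    intro u hu
    have := hu0max hu
    simp only [hcdef, neg_neg]
    exact this
  obtain ⟨C, hC0, hC⟩ := HypAux.eval_bound g (2 * n - 5) hgdeg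
  set R : ℝ := max 1 (C / c) with hRdef
  -- key negativity claim
  have hneg : ∀ p : ℝ × ℝ, R < ‖p‖ → eval ![p.1, p.2] (Hess f) < 0 := by
    intro p hp
    set r : ℝ := ‖p‖ with hrdef
    have hr1 : 1 < r := lt_of_le_of_lt (le_max_left _ _) hp
    have hr0 : 0 < r := lt_trans zero_lt_one hr1
    have hrC : C < c * r := by
      have : C / c < r := lt_of_le_of_lt (le_max_right _ _) hp
      rw [div_lt_iff₀ hcpos] at this
      linarith [this]
    set u : ℝ × ℝ := r⁻¹ • p with hudef
    have huS : u ∈ S := by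
      rw [hSdef, mem_sphere_zero_iff_norm, hudef, norm_smul]
      rw [norm_inv, Real.norm_eq_abs, abs_of_pos hr0, ← hrdef]
      exact inv_mul_cancel₀ (ne_of_gt hr0)
    have hps : ![p.1, p.2] = fun i => r * (![u.1, u.2] i) := by
      funext i
      fin_cases i <;>
        simp [hudef, Prod.smul_fst, Prod.smul_snd, smul_eq_mul, ← mul_assoc,
          mul_inv_cancel₀ (ne_of_gt hr0)]
    have E1 : eval ![p.1, p.2] (Hess h) ≤ r ^ (2 * n - 4) * (-c) := by
      rw [hps, HypAux.eval_smul hHessHom r ![u.1, u.2]]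
      exact mul_le_mul_of_nonneg_left (hub u huS) (pow_nonneg (le_of_lt hr0) _)
    have E2 : eval ![p.1, p.2] g ≤ C * r ^ (2 * n - 5) := by
      refine le_of_abs_le (hC ![p.1, p.2] r (le_of_lt hr1) ?_)
      intro i
      fin_cases i
      · simpa [Real.norm_eq_abs] using norm_fst_le p
      · simpa [Real.norm_eq_abs] using norm_snd_le p
    have e := congrArg (eval ![p.1, p.2]) key
    rw [map_add] at e
    rw [e]
    have epow : r ^ (2 * n - 4) = r ^ (2 * n - 5) * r := by
      rw [← pow_succ]
      congr 1
      omega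
    have h5 : 0 < r ^ (2 * n - 5) := pow_pos hr0 _
    rw [epow] at E1
    nlinarith [E1, E2, h5, hrC]
  have hsub : {p : ℝ × ℝ | 0 ≤ eval ![p.1, p.2] (Hess f)} ⊆ Metric.closedBall 0 R := by
    intro p hp
    rw [Metric.mem_closedBall, dist_zero_right]
    by_contra hout
    rw [not_le] at hout
    exact absurd hp (not_le.mpr (hneg p hout))
  have hB := (Metric.isBounded_closedBall (x := (0 : ℝ × ℝ)) (r := R)).subset hsub
  refine ⟨hB, ?_⟩
  apply Metric.isCompact_of_isClosed_isBounded
  · exact isClosed_eq (contEval (Hess f)) continuous_const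
  · exact hB.subset (fun p hp => le_of_eq (Set.mem_setOf_eq ▸ hp).symm)
end

section
/- Let f ∈ ℝ[x,y] be a polynomial of degree n ≥ 3 whose top-degree homogeneous part f_n is elliptic (i.e., Hess(f_n)(x,y) > 0 for all (x,y) ≠ (0,0)). Then the set of hyperbolic points {(x,y) ∈ ℝ² : Hess(f)(x,y) ≤ 0} is bounded. -/
open MvPolynomial

/-!
Write `f = p + r` with `p = f_n` and `deg r < n`. Then `Hess f = Hess p + g`, where `Hess p` is
homogeneous of degree `2(n - 2)` and `g` is a sum of products of two second derivatives, one of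
which is a second derivative of `r`, so `deg g < 2(n - 2)`. By compactness of the unit sphere and
homogeneity, `Hess p v ≥ c ‖v‖^(2(n-2))` with `c > 0`, while `|g v| ≤ C ‖v‖^(2(n-2)-1)` for
`‖v‖ ≥ 1`; hence `Hess f > 0` outside the ball of radius `max 1 (C / c)`.
-/

namespace MvPolynomial

variable {σ R : Type*}

theorem IsHomogeneous.eval_smul [CommSemiring R] {φ : MvPolynomial σ R} {m : ℕ}
    (h : φ.IsHomogeneous m) (t : R) (v : σ → R) :
    eval (t • v) φ = t ^ m * eval v φ := by
  simp only [eval_eq, Finset.mul_sum, Pi.smul_apply, smul_eq_mul, mul_pow,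
    Finset.prod_mul_distrib, Finset.prod_pow_eq_pow_sum]
  refine Finset.sum_congr rfl fun d hd => ?_
  have hdeg : ∑ j ∈ d.support, d j = m := by
    simpa [Finsupp.weight_apply, Finsupp.sum] using h (mem_support_iff.mp hd)
  rw [hdeg]
  ring

theorem totalDegree_pderiv_le [CommSemiring R] [DecidableEq σ] (p : MvPolynomial σ R) (i : σ) :
    (pderiv i p).totalDegree ≤ p.totalDegree - 1 := by
  conv_lhs => rw [← sum_homogeneousComponent p, map_sum]
  refine totalDegree_finsetSum_le fun j hj => ?_
  refine (homogeneousComponent_isHomogeneous j p).pderiv.totalDegree_le.trans ?_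
  have := Finset.mem_range.mp hj
  omega

theorem totalDegree_sub_homogeneousComponent_lt [CommRing R] {f : MvPolynomial σ R} {n : ℕ}
    (hn : 0 < n) (hf : f.totalDegree ≤ n) :
    (f - homogeneousComponent n f).totalDegree < n := by
  refine (Finset.sup_lt_iff hn).2 fun d hd => ?_
  rw [mem_support_iff, coeff_sub, coeff_homogeneousComponent] at hd
  have hle : d.degree ≤ n := by
    refine (le_totalDegree (mem_support_iff.mpr fun h => hd ?_)).trans hf
    simp [h]
  have hne : d.degree ≠ n := fun h => hd (by simp [h])
  exact hle.lt_of_ne hne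

theorem exists_abs_eval_le_mul_norm_pow [Fintype σ] (p : MvPolynomial σ ℝ) :
    ∃ C, 0 ≤ C ∧ ∀ v : σ → ℝ, 1 ≤ ‖v‖ → |eval v p| ≤ C * ‖v‖ ^ p.totalDegree := by
  refine ⟨∑ d ∈ p.support, |coeff d p|, by positivity, fun v hv => ?_⟩
  rw [eval_eq, Finset.sum_mul]
  refine (Finset.abs_sum_le_sum_abs _ _).trans (Finset.sum_le_sum fun d hd => ?_)
  rw [abs_mul, Finset.abs_prod]
  gcongr
  calc ∏ j ∈ d.support, |v j ^ d j|
      ≤ ∏ j ∈ d.support, ‖v‖ ^ d j := by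
        gcongr with j
        rw [abs_pow]
        exact pow_le_pow_left₀ (abs_nonneg _) (norm_le_pi_norm v j) _
    _ = ‖v‖ ^ d.degree := Finset.prod_pow_eq_pow_sum _ _ _
    _ ≤ ‖v‖ ^ p.totalDegree := pow_le_pow_right₀ hv (le_totalDegree hd)

theorem IsHomogeneous.exists_pos_mul_norm_pow_le_eval [Fintype σ] {P : MvPolynomial σ ℝ}
    {m : ℕ} (hP : P.IsHomogeneous m) (hpos : ∀ v ≠ 0, 0 < eval v P) :
    ∃ c > 0, ∀ v ≠ 0, c * ‖v‖ ^ m ≤ eval v P := by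
  obtain ⟨c, hc, hcP⟩ := (isCompact_sphere (0 : σ → ℝ) 1).exists_forall_le'
    (continuous_eval P).continuousOn fun u hu => hpos u (ne_zero_of_mem_unit_sphere ⟨u, hu⟩)
  refine ⟨c, hc, fun v hv => ?_⟩
  have hnorm : ‖v‖ ≠ 0 := norm_ne_zero_iff.mpr hv
  have hu : ‖v‖⁻¹ • v ∈ Metric.sphere (0 : σ → ℝ) 1 := by
    simp [norm_smul, hnorm]
  calc c * ‖v‖ ^ m ≤ ‖v‖ ^ m * eval (‖v‖⁻¹ • v) P := by
        rw [mul_comm]; gcongr; exact hcP _ hu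
    _ = eval v P := by rw [← hP.eval_smul, smul_inv_smul₀ hnorm]

theorem isBounded_setOf_eval_add_nonpos [Fintype σ] {P Q : MvPolynomial σ ℝ} {m : ℕ}
    (hP : P.IsHomogeneous m) (hpos : ∀ v ≠ 0, 0 < eval v P) (hQ : Q.totalDegree < m) :
    Bornology.IsBounded {v : σ → ℝ | eval v (P + Q) ≤ 0} := by
  obtain ⟨c, hc, hcP⟩ := hP.exists_pos_mul_norm_pow_le_eval hpos
  obtain ⟨C, hC, hCQ⟩ := exists_abs_eval_le_mul_norm_pow Q
  obtain ⟨k, rfl⟩ : ∃ k, m = k + 1 := ⟨m - 1, by omega⟩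
  refine isBounded_iff_forall_norm_le.2 ⟨max 1 (C / c), fun v hv => ?_⟩
  by_contra! hlarge
  have h1 : 1 ≤ ‖v‖ := (le_max_left _ _).trans hlarge.le
  have hCv : C < c * ‖v‖ := (div_lt_iff₀' hc).1 ((le_max_right _ _).trans_lt hlarge)
  have hQv : -(C * ‖v‖ ^ k) ≤ eval v Q :=
    neg_le_of_abs_le ((hCQ v h1).trans
      (mul_le_mul_of_nonneg_left (pow_le_pow_right₀ h1 (by omega)) hC))
  have hPv := hcP v (norm_pos_iff.1 (one_pos.trans_le h1))
  have : 0 < eval v (P + Q) := by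
    rw [map_add]
    nlinarith [pow_pos (one_pos.trans_le h1) k, pow_succ ‖v‖ k]
  exact this.not_ge hv

theorem IsHomogeneous.hess {p : MvPolynomial (Fin 2) ℝ} {k : ℕ} (hp : p.IsHomogeneous (k + 2)) :
    (Hess p).IsHomogeneous (2 * k) := by
  have h : ∀ i j, (pderiv i (pderiv j p)).IsHomogeneous k := fun i j => by
    simpa using hp.pderiv.pderiv (i := i)
  rw [Hess, two_mul]
  exact ((h 0 0).mul (h 1 1)).sub (by simpa [mul_two] using (h 0 1).pow 2)

theorem totalDegree_hess_add_sub_hess_lt {p q : MvPolynomial (Fin 2) ℝ} {k : ℕ} (hk : 0 < k)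
    (hp : p.IsHomogeneous (k + 2)) (hq : q.totalDegree < k + 2) :
    (Hess (p + q) - Hess p).totalDegree < 2 * k := by
  set a := fun i j => pderiv i (pderiv j p)
  set b := fun i j => pderiv i (pderiv j q)
  have ha : ∀ i j, (a i j).totalDegree ≤ k := fun i j => by
    simpa using ((hp.pderiv (i := j)).pderiv (i := i)).totalDegree_le
  have hb : ∀ i j, (b i j).totalDegree < k := fun i j =>
    ((totalDegree_pderiv_le _ i).trans
      (Nat.sub_le_sub_right (totalDegree_pderiv_le q j) 1)).trans_lt (by omega)
  have hab : ∀ i j, (a i j + b i j).totalDegree ≤ k := fun i j =>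
    (totalDegree_add _ _).trans (max_le (ha i j) (hb i j).le)
  have mul_lt : ∀ x y : MvPolynomial (Fin 2) ℝ, x.totalDegree ≤ k → y.totalDegree < k →
      (x * y).totalDegree < 2 * k := fun x y hx hy => (totalDegree_mul x y).trans_lt (by omega)
  have hexpand : Hess (p + q) - Hess p =
      a 0 0 * b 1 1 + (a 1 1 + b 1 1) * b 0 0 - (a 0 1 + (a 0 1 + b 0 1)) * b 0 1 := by
    simp only [Hess, map_add, a, b]
    ring
  rw [hexpand]
  refine (totalDegree_sub _ _).trans_lt (max_lt ((totalDegree_add _ _).trans_lt (max_lt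
    (mul_lt _ _ (ha 0 0) (hb 1 1)) (mul_lt _ _ (hab 1 1) (hb 0 0)))) (mul_lt _ _ ?_ (hb 0 1)))
  exact (totalDegree_add _ _).trans (max_le (ha 0 1) (hab 0 1))

end MvPolynomial

theorem elliptic_top_part_bounded_hyperbolic_region
    (f : MvPolynomial (Fin 2) ℝ) (n : ℕ) (hn : 3 ≤ n)
    (hdeg : f.totalDegree = n)
    (hell : ∀ x y : ℝ, (x, y) ≠ (0, 0) →
      0 < eval ![x, y] (Hess (homogeneousComponent n f))) :
    Bornology.IsBounded {p : ℝ × ℝ | eval ![p.1, p.2] (Hess f) ≤ 0} := by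
  obtain ⟨k, rfl⟩ : ∃ k, n = k + 2 := ⟨n - 2, by omega⟩
  set p := homogeneousComponent (k + 2) f
  have hp : p.IsHomogeneous (k + 2) := homogeneousComponent_isHomogeneous _ f
  have hrest : (f - p).totalDegree < k + 2 :=
    totalDegree_sub_homogeneousComponent_lt (by omega) hdeg.le
  have hpos : ∀ v : Fin 2 → ℝ, v ≠ 0 → 0 < eval v (Hess p) := fun v hv => by
    have hv2 : ![v 0, v 1] = v := by ext i; fin_cases i <;> rfl
    refine hv2 ▸ hell (v 0) (v 1) fun h => hv ?_
    obtain ⟨h0, h1⟩ := Prod.mk.inj h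
    ext i; fin_cases i <;> assumption
  have hbdd := isBounded_setOf_eval_add_nonpos hp.hess hpos
    (totalDegree_hess_add_sub_hess_lt (by omega) hp hrest)
  rw [add_sub_cancel, add_sub_cancel] at hbdd
  have himage := (ContinuousLinearEquiv.finTwoArrow ℝ ℝ).lipschitz.isBounded_image hbdd
  rwa [ContinuousLinearEquiv.image_eq_preimage_symm] at himage
end
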